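/- arXiv:2604.21648 — 7 statements merged into one kernel-verified Lean document; each statement's English description precedes it below -/
import Mathlib

section
/- Let B be HPD and Π ∈ ℂⁿˣⁿ a projection with Π ≠ 0 and Π ≠ I. Then ‖Π‖_B = ‖I−Π‖_B, where ‖·‖_B is the operator norm induced by the B-norm ‖x‖_B = √(xᴴBx). -/
open Matrix ComplexOrder

noncomputable section

variable {n : ℕ}

/-- The `B`-inner product `⟨x,y⟩_B = yᴴ B x`. -/
def binner (B : Matrix (Fin n) (Fin n) ℂ) (x y : Fin n → ℂ) : ℂ :=
  star y ⬝ᵥ B.mulVec x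

/-- The `B`-adjoint `A⁺ = B⁻¹ Aᴴ B`. -/
def bAdj (B A : Matrix (Fin n) (Fin n) ℂ) : Matrix (Fin n) (Fin n) ℂ :=
  B⁻¹ * Aᴴ * B

/-- The `B`-vector norm `‖x‖_B = √(xᴴ B x)`. -/
def bVecNorm (B : Matrix (Fin n) (Fin n) ℂ) (x : Fin n → ℂ) : ℝ :=
  Real.sqrt (binner B x x).re

/-- The operator norm induced by the `B`-vector norm. -/
def bNorm (B C : Matrix (Fin n) (Fin n) ℂ) : ℝ :=
  sSup {r : ℝ | ∃ x : Fin n → ℂ, bVecNorm B x = 1 ∧ r = bVecNorm B (C.mulVec x)}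

section CoreLemma
variable {E : Type*} [NormedAddCommGroup E] [InnerProductSpace ℂ E] [FiniteDimensional ℂ E]

local notation "⟪" x ", " y "⟫" => @inner ℂ _ _ x y

lemma core_le (P : E →L[ℂ] E) (hP : P * P = P) (h0 : P ≠ 0) (h1 : P ≠ 1) :
    ‖1 - P‖ ≤ ‖P‖ := by
  set Q : E →L[ℂ] E := 1 - P with hQdef
  obtain ⟨v, hv⟩ : ∃ v, P v ≠ 0 := by
    by_contra h
    push_neg at h
    exact h0 (by ext x; simpa using h x)
  have hvne : v ≠ 0 := fun h => hv (by simp [h])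
  haveI : Nontrivial E := nontrivial_of_ne v 0 hvne
  have hPP : ∀ w, P (P w) = P w := fun w => by
    rw [← ContinuousLinearMap.mul_apply, hP]
  have hQapp : ∀ w, Q w = w - P w := fun w => by simp [hQdef]
  have hQP : ∀ w, Q (P w) = 0 := fun w => by rw [hQapp, hPP, sub_self]
  have hPQ : ∀ w, P (Q w) = 0 := fun w => by
    rw [hQapp, map_sub, hPP, sub_self]
  -- ‖P‖ ≥ 1
  have hP1 : (1:ℝ) ≤ ‖P‖ := by
    have := P.le_opNorm (P v)
    rw [hPP] at this
    have hnv : 0 < ‖P v‖ := norm_pos_iff.mpr hv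
    nlinarith
  -- Q ≠ 0, so ‖Q‖ > 0
  obtain ⟨u, hu⟩ : ∃ u, Q u ≠ 0 := by
    by_contra h
    push_neg at h
    apply h1
    have : Q = 0 := by ext x; simpa using h x
    rw [hQdef] at this
    exact (sub_eq_zero.mp this).symm
  have hQ0 : 0 < ‖Q‖ := by
    have := Q.le_opNorm u
    have hnu : 0 < ‖Q u‖ := norm_pos_iff.mpr hu
    by_contra h
    push_neg at h
    nlinarith [norm_nonneg u]
  -- maximizer on the sphere
  obtain ⟨x, hxS, hxmax0⟩ :=
    (isCompact_sphere (0:E) 1).exists_isMaxOn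
      (NormedSpace.sphere_nonempty.mpr zero_le_one)
      ((continuous_norm.comp Q.continuous).continuousOn)
  have hxmax : ∀ y ∈ Metric.sphere (0:E) 1, ‖Q y‖ ≤ ‖Q x‖ := fun y hy => hxmax0 hy
  rw [mem_sphere_zero_iff_norm] at hxS
  have hxmax' : ∀ y : E, ‖y‖ = 1 → ‖Q y‖ ≤ ‖Q x‖ := fun y hy =>
    hxmax y (mem_sphere_zero_iff_norm.mpr hy)
  have hQnorm : ‖Q‖ = ‖Q x‖ := by
    refine le_antisymm ?_ ?_
    · refine Q.opNorm_le_bound (norm_nonneg _) (fun y => ?_)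
      rcases eq_or_ne y 0 with rfl | hy
      · simp
      · have hny : 0 < ‖y‖ := norm_pos_iff.mpr hy
        have h1' : ‖(‖y‖⁻¹ : ℂ) • y‖ = 1 := by
          rw [norm_smul]
          simp [norm_inv, hny.ne']
        have h2 := hxmax' _ h1'
        rw [_root_.map_smul, norm_smul, norm_inv, Complex.norm_real,
          Real.norm_eq_abs, abs_of_pos hny] at h2
        rw [← mul_le_mul_iff_left₀ hny, inv_mul_eq_div, div_mul_cancel₀] at h2
        · linarith [h2]
        · exact hny.ne'
    · calc ‖Q x‖ ≤ ‖Q‖ * ‖x‖ := Q.le_opNorm x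
        _ = ‖Q‖ := by rw [hxS, mul_one]
  rcases eq_or_ne (P x) 0 with hPx | hPx
  · -- Q x = x, so ‖Q‖ = 1 ≤ ‖P‖
    have : Q x = x := by rw [hQapp, hPx, sub_zero]
    rw [hQnorm, this, hxS]
    exact hP1
  · set p : ℝ := ‖P x‖ with hpdef
    have hp : 0 < p := norm_pos_iff.mpr hPx
    -- Step A : ⟪P x, x⟫ = 0
    have horth : ⟪P x, x⟫ = 0 := by
      set a : ℂ := ⟪P x, x⟫ with hadef
      set c : ℂ := a / ((p:ℂ)^2) with hcdef
      set z : E := x - c • P x with hzdef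
      have hQz : Q z = Q x := by
        rw [hzdef, map_sub, _root_.map_smul, hQP, smul_zero, sub_zero]
      have hz1 : (1:ℝ) ≤ ‖z‖ := by
        have h3 : ‖Q x‖ ≤ ‖Q‖ * ‖z‖ := by
          rw [← hQz]; exact Q.le_opNorm z
        rw [← hQnorm] at h3
        nlinarith
      have hzsq : ‖z‖^2 = 1 - ‖a‖^2 / p^2 := by
        have h4 := norm_sub_sq (𝕜 := ℂ) x (c • P x)
        rw [inner_smul_right] at h4
        have hixp : ⟪x, P x⟫ = (starRingEnd ℂ) a := (inner_conj_symm _ _).symm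
        have hcs : c * ⟪x, P x⟫ = (((‖a‖^2 / p^2 : ℝ)) : ℂ) := by
          rw [hixp, hcdef, div_mul_eq_mul_div, Complex.mul_conj']
          push_cast
          ring
        have hnc : ‖c • P x‖^2 = ‖a‖^2 / p^2 := by
          rw [norm_smul, mul_pow, ← hpdef, hcdef, norm_div, div_pow, norm_pow,
            Complex.norm_real, Real.norm_eq_abs, abs_of_pos hp]
          field_simp
        rw [hcs, hnc, hxS] at h4
        simp only [RCLike.re_to_complex, Complex.ofReal_re] at h4
        rw [← hzdef] at h4
        rw [h4]
        ring
      have hle : ‖a‖^2 ≤ 0 := by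
        have hp2 : (0:ℝ) < p^2 := by positivity
        have h1z : (1:ℝ) ≤ ‖z‖^2 := by nlinarith
        have hdiv : ‖a‖^2 / p^2 ≤ 0 := by linarith
        rcases div_nonpos_iff.mp hdiv with ⟨_, h⟩ | ⟨h, _⟩
        · linarith
        · exact h
      have : ‖a‖ = 0 := by nlinarith [norm_nonneg a, sq_nonneg ‖a‖]
      exact norm_eq_zero.mp this
    -- Step B : ‖Q x‖^2 = 1 + p^2
    have hQxsq : ‖Q x‖^2 = 1 + p^2 := by
      have h5 := norm_sub_sq (𝕜 := ℂ) x (P x)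
      have hixp : ⟪x, P x⟫ = 0 := by
        rw [← inner_conj_symm, horth, map_zero]
      rw [hixp, hxS, ← hpdef, ← hQapp] at h5
      simp at h5
      linarith
    -- Step C : the test vector y
    set t : ℝ := (1 + p^2)⁻¹ with htdef
    have ht : 0 < t := by positivity
    set y : E := x - (t:ℂ) • Q x with hydef
    have hPy : P y = P x := by
      rw [hydef, map_sub, _root_.map_smul, hPQ, smul_zero, sub_zero]
    have hixQx : ⟪x, Q x⟫ = 1 := by
      rw [hQapp, inner_sub_right, inner_self_eq_norm_sq_to_K, hxS]
      have : ⟪x, P x⟫ = 0 := by rw [← inner_conj_symm, horth, map_zero]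
      rw [this]
      norm_num
    have hysq : ‖y‖^2 = p^2 * t := by
      have h6 := norm_sub_sq (𝕜 := ℂ) x ((t:ℂ) • Q x)
      rw [inner_smul_right, hixQx, mul_one, norm_smul, Complex.norm_real,
        Real.norm_eq_abs, abs_of_pos ht, hxS, mul_pow, hQxsq] at h6
      simp only [RCLike.re_to_complex, Complex.ofReal_re] at h6
      rw [← hydef] at h6
      rw [h6, htdef]
      field_simp
      ring
    have hyP : ‖P x‖ ≤ ‖P‖ * ‖y‖ := by rw [← hPy]; exact P.le_opNorm y
    have hQsq : ‖Q‖^2 ≤ ‖P‖^2 := by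
      have hysq' : ‖y‖^2 = p^2 / (1 + p^2) := by rw [hysq, htdef]; ring
      have hny : 0 ≤ ‖y‖ := norm_nonneg y
      have hPn : 0 ≤ ‖P‖ := norm_nonneg P
      have h7 : p^2 ≤ ‖P‖^2 * ‖y‖^2 := by nlinarith [hyP]
      rw [hysq'] at h7
      have h8 : 1 + p^2 ≤ ‖P‖^2 := by
        have hpos : (0:ℝ) < 1 + p^2 := by positivity
        have h7' : (1 + p^2) * p^2 ≤ ‖P‖^2 * p^2 := by
          have h9 := mul_le_mul_of_nonneg_right h7 hpos.le
          calc (1 + p^2) * p^2 = p^2 * (1 + p^2) := by ring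
            _ ≤ (‖P‖^2 * (p^2 / (1 + p^2))) * (1 + p^2) := h9
            _ = ‖P‖^2 * p^2 := by field_simp
        exact le_of_mul_le_mul_right h7' (by positivity)
      rw [hQnorm, hQxsq]
      exact h8
    calc ‖Q‖ = Real.sqrt (‖Q‖^2) := (Real.sqrt_sq (norm_nonneg Q)).symm
      _ ≤ Real.sqrt (‖P‖^2) := Real.sqrt_le_sqrt hQsq
      _ = ‖P‖ := Real.sqrt_sq (norm_nonneg P)

end CoreLemma
open scoped MatrixOrder in
lemma bVecNorm_eq (B : Matrix (Fin n) (Fin n) ℂ) (hB : B.PosDef) (x : Fin n → ℂ) :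
    bVecNorm B x =
      ‖(WithLp.equiv 2 (Fin n → ℂ)).symm (CFC.sqrt B *ᵥ x)‖ := by
  set S := CFC.sqrt B with hSdef
  have hS : Sᴴ = S := (CFC.sqrt_nonneg B).posSemidef.1
  have key : binner B x x = star (S *ᵥ x) ⬝ᵥ (S *ᵥ x) := by
    rw [binner, ← CFC.sqrt_mul_sqrt_self B hB.posSemidef.nonneg, ← hSdef, ← mulVec_mulVec,
      dotProduct_mulVec, star_mulVec, hS]
  rw [bVecNorm, key, EuclideanSpace.norm_eq]
  congr 1
  rw [dotProduct, Complex.re_sum]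
  apply Finset.sum_congr rfl
  intro i _
  simp only [Pi.star_apply, WithLp.equiv_symm_apply, PiLp.toLp_apply]
  rw [(by rfl : star ((S *ᵥ x) i) = (starRingEnd ℂ) ((S *ᵥ x) i)), mul_comm,
    Complex.mul_conj', ← Complex.ofReal_pow, Complex.ofReal_re]

lemma sup_eq_opNorm (hn : 0 < n)
    (T : EuclideanSpace ℂ (Fin n) →L[ℂ] EuclideanSpace ℂ (Fin n)) :
    sSup {r : ℝ | ∃ y : EuclideanSpace ℂ (Fin n), ‖y‖ = 1 ∧ r = ‖T y‖} = ‖T‖ := by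
  set s := {r : ℝ | ∃ y : EuclideanSpace ℂ (Fin n), ‖y‖ = 1 ∧ r = ‖T y‖} with hsdef
  have he : (EuclideanSpace.single (⟨0, hn⟩ : Fin n) (1:ℂ) : EuclideanSpace ℂ (Fin n)) ∈
      Metric.sphere 0 1 := by
    simp [EuclideanSpace.norm_single]
  have hne : s.Nonempty := by
    refine ⟨‖T (EuclideanSpace.single (⟨0, hn⟩ : Fin n) (1:ℂ))‖,
      EuclideanSpace.single (⟨0, hn⟩ : Fin n) (1:ℂ), ?_, rfl⟩
    simpa [mem_sphere_zero_iff_norm] using he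
  have hbdd : BddAbove s := by
    refine ⟨‖T‖, fun r hr => ?_⟩
    obtain ⟨y, hy, rfl⟩ := hr
    calc ‖T y‖ ≤ ‖T‖ * ‖y‖ := T.le_opNorm y
      _ = ‖T‖ := by rw [hy, mul_one]
  refine le_antisymm (csSup_le hne ?_) ?_
  · rintro r ⟨y, hy, rfl⟩
    calc ‖T y‖ ≤ ‖T‖ * ‖y‖ := T.le_opNorm y
      _ = ‖T‖ := by rw [hy, mul_one]
  · have h0 : (0:ℝ) ≤ sSup s := by
      obtain ⟨r, hr⟩ := hne
      obtain ⟨y, hy, rfl⟩ := hr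
      exact le_trans (norm_nonneg _) (le_csSup hbdd ⟨y, hy, rfl⟩)
    refine T.opNorm_le_bound h0 (fun y => ?_)
    rcases eq_or_ne y 0 with rfl | hy
    · simp
    · have hny : 0 < ‖y‖ := norm_pos_iff.mpr hy
      have h1' : ‖(‖y‖⁻¹ : ℂ) • y‖ = 1 := by
        rw [norm_smul]
        simp [norm_inv, hny.ne']
      have hmem : ‖T ((‖y‖⁻¹ : ℂ) • y)‖ ∈ s := ⟨_, h1', rfl⟩
      have h2 : ‖T ((‖y‖⁻¹ : ℂ) • y)‖ ≤ sSup s := le_csSup hbdd hmem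
      rw [_root_.map_smul, norm_smul, norm_inv, Complex.norm_real,
        Real.norm_eq_abs, abs_of_pos hny] at h2
      rw [← mul_le_mul_iff_left₀ hny, inv_mul_eq_div, div_mul_cancel₀] at h2
      · linarith [h2]
      · exact hny.ne'

set_option maxHeartbeats 1000000 in
set_option synthInstance.maxHeartbeats 400000 in
theorem stmt1 (B Pi : Matrix (Fin n) (Fin n) ℂ) (hB : B.PosDef)
    (hPi : Pi * Pi = Pi) (h0 : Pi ≠ 0) (h1 : Pi ≠ 1) :
    bNorm B Pi = bNorm B (1 - Pi) := by
  rcases Nat.eq_zero_or_pos n with hn | hn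
  · subst hn
    haveI : IsEmpty (Fin 0) := Fin.isEmpty
    exact absurd (Subsingleton.elim Pi 0) h0
  · open scoped MatrixOrder in set S := CFC.sqrt B with hSdef
    have hdet : IsUnit S.det := by
      have hmul : S.det * S.det = B.det := by
        open scoped MatrixOrder in rw [← det_mul, CFC.sqrt_mul_sqrt_self B hB.posSemidef.nonneg]
      have hBdet : B.det ≠ 0 := hB.det_pos.ne'
      have : S.det ≠ 0 := fun h => hBdet (by rw [← hmul, h, mul_zero])
      exact isUnit_iff_ne_zero.mpr this
    have hSiS : S⁻¹ * S = 1 := nonsing_inv_mul S hdet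
    have hSSi : S * S⁻¹ = 1 := mul_nonsing_inv S hdet
    have key : ∀ C : Matrix (Fin n) (Fin n) ℂ,
        bNorm B C = ‖toEuclideanCLM (𝕜 := ℂ) (n := Fin n) (S * C * S⁻¹)‖ := by
      intro C
      rw [bNorm, ← sup_eq_opNorm hn]
      congr 1
      ext r
      constructor
      · rintro ⟨x, hx1, hx2⟩
        refine ⟨(WithLp.equiv 2 (Fin n → ℂ)).symm (S *ᵥ x), ?_, ?_⟩
        · rw [← bVecNorm_eq B hB x]
          exact hx1
        · rw [hx2, WithLp.equiv_symm_apply, toEuclideanCLM_toLp, ← WithLp.equiv_symm_apply,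
            mulVec_mulVec, Matrix.mul_assoc (S * C) S⁻¹ S, hSiS, Matrix.mul_one,
            ← mulVec_mulVec, bVecNorm_eq B hB]
      · rintro ⟨y, hy1, hy2⟩
        refine ⟨S⁻¹ *ᵥ (WithLp.equiv 2 (Fin n → ℂ) y), ?_, ?_⟩
        · rw [bVecNorm_eq B hB, mulVec_mulVec, hSSi, one_mulVec,
            Equiv.symm_apply_apply]
          exact hy1
        · rw [hy2, bVecNorm_eq B hB]
          conv_lhs => rw [← Equiv.symm_apply_apply (WithLp.equiv 2 (Fin n → ℂ)) y]
          rw [WithLp.equiv_symm_apply, toEuclideanCLM_toLp, ← WithLp.equiv_symm_apply]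
          congr 1
          rw [mulVec_mulVec, mulVec_mulVec, Matrix.mul_assoc]
    rw [key Pi, key (1 - Pi)]
    have hM1 : S * (1 - Pi) * S⁻¹ = 1 - S * Pi * S⁻¹ := by
      rw [Matrix.mul_sub, Matrix.mul_one, Matrix.sub_mul, hSSi]
    rw [hM1]
    set M := S * Pi * S⁻¹ with hMdef
    set T := toEuclideanCLM (𝕜 := ℂ) (n := Fin n) M with hTdef
    have hmap : toEuclideanCLM (𝕜 := ℂ) (n := Fin n) (1 - M) = 1 - T := by
      rw [map_sub, _root_.map_one]
    rw [hmap]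
    have hrec : S⁻¹ * M * S = Pi := by
      rw [hMdef]
      calc S⁻¹ * (S * Pi * S⁻¹) * S = (S⁻¹ * S) * Pi * (S⁻¹ * S) := by
            simp only [Matrix.mul_assoc]
        _ = Pi := by rw [hSiS, Matrix.one_mul, Matrix.mul_one]
    have hMM : M * M = M := by
      rw [hMdef]
      calc S * Pi * S⁻¹ * (S * Pi * S⁻¹) = S * Pi * (S⁻¹ * S) * Pi * S⁻¹ := by
            simp only [Matrix.mul_assoc]
        _ = S * Pi * Pi * S⁻¹ := by rw [hSiS, Matrix.mul_one]
        _ = S * Pi * S⁻¹ := by rw [Matrix.mul_assoc S Pi Pi, hPi]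
    have hT : T * T = T := by rw [hTdef, ← _root_.map_mul, hMM]
    have hT0 : T ≠ 0 := by
      intro h
      apply h0
      have hM0 : M = 0 := (toEuclideanCLM (𝕜 := ℂ) (n := Fin n)).injective
        (by rw [map_zero]; exact hTdef.symm.trans h)
      rw [← hrec, hM0, Matrix.mul_zero, Matrix.zero_mul]
    have hT1 : T ≠ 1 := by
      intro h
      apply h1
      have hM1' : M = 1 := (toEuclideanCLM (𝕜 := ℂ) (n := Fin n)).injective
        (by rw [_root_.map_one]; exact hTdef.symm.trans h)
      rw [← hrec, hM1', Matrix.mul_one, hSiS]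
    have hQT : (1 - T) * (1 - T) = 1 - T := by
      rw [sub_mul, one_mul, mul_sub, mul_one, hT]
      abel
    have hQT0 : (1 : EuclideanSpace ℂ (Fin n) →L[ℂ] EuclideanSpace ℂ (Fin n)) - T ≠ 0 :=
      fun h => hT1 (by rwa [sub_eq_zero, eq_comm] at h)
    have hQT1 : (1 : EuclideanSpace ℂ (Fin n) →L[ℂ] EuclideanSpace ℂ (Fin n)) - T ≠ 1 :=
      fun h => hT0 (sub_eq_self.mp h)
    refine le_antisymm ?_ (core_le T hT hT0 hT1)
    have := core_le (1 - T) hQT hQT0 hQT1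
    rwa [sub_sub_cancel] at this

end
end

section
/- A ∈ ℂⁿˣⁿ is B-normal if and only if A⁺ = p(A) for some polynomial p ∈ ℂ[z], where A⁺ = B⁻¹AᴴB. -/
open Matrix ComplexOrder

noncomputable section

variable {n : ℕ}

open Polynomial

lemma pow_conj' (S Si A : Matrix (Fin n) (Fin n) ℂ) (h1 : S * Si = 1) (h2 : Si * S = 1)
    (k : ℕ) : (S * A * Si) ^ k = S * A ^ k * Si := by
  induction k with
  | zero => simp [h1]
  | succ k ih =>
      have h2' : ∀ X, Si * (S * X) = X := fun X => by rw [← Matrix.mul_assoc, h2, Matrix.one_mul]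
      rw [pow_succ, ih, pow_succ]
      simp only [Matrix.mul_assoc, h2']

lemma aeval_conj' (S Si A : Matrix (Fin n) (Fin n) ℂ) (h1 : S * Si = 1) (h2 : Si * S = 1)
    (p : Polynomial ℂ) : aeval (S * A * Si) p = S * aeval A p * Si := by
  induction p using Polynomial.induction_on' with
  | add p q hp hq => rw [map_add, map_add, hp, hq]; noncomm_ring
  | monomial k c =>
      rw [aeval_monomial, aeval_monomial, pow_conj' S Si A h1 h2]
      simp [Algebra.algebraMap_eq_smul_one, smul_mul_assoc, mul_smul_comm]

open scoped Matrix.Norms.L2Operator in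
lemma conjTranspose_eq_aeval' (N : Matrix (Fin n) (Fin n) ℂ)
    (h : IsStarNormal N) : ∃ p : Polynomial ℂ, Nᴴ = Polynomial.aeval N p := by
  have hc : CompleteSpace (Matrix (Fin n) (Fin n) ℂ) := FiniteDimensional.complete ℂ _
  let _ : CStarAlgebra (Matrix (Fin n) (Fin n) ℂ) := Matrix.instCStarAlgebra
  obtain ⟨s, hs⟩ := (Matrix.finite_spectrum (R := ℂ) N).exists_finset_coe
  refine ⟨Lagrange.interpolate s id (fun z => star z), ?_⟩
  have h1 : star N = cfc (star · : ℂ → ℂ) N := (cfc_star_id (R := ℂ) (a := N) h).symm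
  have h2 : cfc (star · : ℂ → ℂ) N =
      cfc (fun z => (Lagrange.interpolate s id (fun w => star w)).eval z) N := by
    apply cfc_congr
    intro z hz
    rw [← hs] at hz
    exact (Lagrange.eval_interpolate_at_node _ (Set.injOn_id _) hz).symm
  rw [← Matrix.star_eq_conjTranspose, h1, h2, cfc_polynomial _ N h]

open scoped Matrix.Norms.L2Operator MatrixOrder in
theorem stmt7 (B A : Matrix (Fin n) (Fin n) ℂ) (hB : B.PosDef) :
    A * bAdj B A = bAdj B A * A ↔
      ∃ p : Polynomial ℂ, bAdj B A = Polynomial.aeval A p := by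
  constructor
  · intro hN
    set S := CFC.sqrt B with hSdef
    have hSH : Sᴴ = S := (CFC.sqrt_nonneg B).posSemidef.isHermitian
    have hSS : S * S = B := CFC.sqrt_mul_sqrt_self B hB.posSemidef.nonneg
    have hdetS : IsUnit S.det := by
      have h : S.det * S.det = B.det := by rw [← det_mul, hSS]
      have hb : IsUnit B.det := (Matrix.isUnit_iff_isUnit_det _).mp hB.isUnit
      rw [← h] at hb
      exact (IsUnit.mul_iff.mp hb).1
    have h1 : S * S⁻¹ = 1 := mul_nonsing_inv S hdetS
    have h2 : S⁻¹ * S = 1 := nonsing_inv_mul S hdetS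
    have hiH : (S⁻¹)ᴴ = S⁻¹ := by rw [conjTranspose_nonsing_inv, hSH]
    set N := S * A * S⁻¹ with hNdef
    have hBinv : B⁻¹ = S⁻¹ * S⁻¹ := by rw [← hSS, Matrix.mul_inv_rev]
    have hadj : Nᴴ = S * bAdj B A * S⁻¹ := by
      rw [hNdef, conjTranspose_mul, conjTranspose_mul, hiH, hSH, bAdj, hBinv, ← hSS]
      simp only [Matrix.mul_assoc]
      rw [show S * (S⁻¹ * (S⁻¹ * (Aᴴ * (S * (S * S⁻¹))))) = S⁻¹ * (Aᴴ * S) by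
        simp only [← Matrix.mul_assoc, h1, h2, Matrix.one_mul, Matrix.mul_one]]
    have hnormal : IsStarNormal N := by
      constructor
      rw [Matrix.star_eq_conjTranspose, hadj, hNdef, Commute, SemiconjBy]
      calc S * bAdj B A * S⁻¹ * (S * A * S⁻¹) = S * (bAdj B A * A) * S⁻¹ := by
            simp only [Matrix.mul_assoc]
            simp only [← Matrix.mul_assoc, h2, Matrix.one_mul]
        _ = S * (A * bAdj B A) * S⁻¹ := by rw [← hN]
        _ = S * A * S⁻¹ * (S * bAdj B A * S⁻¹) := by
            simp only [Matrix.mul_assoc]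
            simp only [← Matrix.mul_assoc, h2, Matrix.one_mul]
    obtain ⟨p, hp⟩ := conjTranspose_eq_aeval' N hnormal
    refine ⟨p, ?_⟩
    rw [aeval_conj' S S⁻¹ A h1 h2 p, hadj] at hp
    have h3 := congrArg (fun M => S⁻¹ * M * S) hp
    simp only [Matrix.mul_assoc, h2, Matrix.mul_one] at h3
    rw [← Matrix.mul_assoc, ← Matrix.mul_assoc, h2, Matrix.one_mul, Matrix.one_mul] at h3
    exact h3
  · rintro ⟨p, hp⟩
    rw [hp]
    have : A * aeval A p = aeval A (X * p) := by rw [_root_.map_mul, aeval_X]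
    rw [this, mul_comm X p, _root_.map_mul, aeval_X]
end
end

section
/- Let A be nonsingular, R, P ∈ ℂⁿˣⁿᶜ with RᴴAP nonsingular, B HPD, and Π_A = P(RᴴAP)⁻¹RᴴA. Then Π_A is B-orthogonal (Π_A = B⁻¹Π_AᴴB) if and only if range(P) = range(B⁻¹AᴴR). -/
open Matrix ComplexOrder

noncomputable section

variable {n : ℕ}

/-- If `M = N * X` and `M * N = N` then ranges of `M` and `N` coincide. -/
lemma rangeEqAux {a b : ℕ} (M : Matrix (Fin a) (Fin a) ℂ) (N : Matrix (Fin a) (Fin b) ℂ)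
    (X : Matrix (Fin b) (Fin a) ℂ) (h1 : M = N * X) (h2 : M * N = N) :
    LinearMap.range M.mulVecLin = LinearMap.range N.mulVecLin := by
  apply le_antisymm
  · rw [h1, Matrix.mulVecLin_mul]
    exact LinearMap.range_comp_le_range _ _
  · conv_lhs => rw [← h2]
    rw [Matrix.mulVecLin_mul]
    exact LinearMap.range_comp_le_range _ _

/-- factor through a matrix whose range contains the columns -/
lemma existsFactor {a b c : ℕ} (N : Matrix (Fin a) (Fin b) ℂ) (F : Matrix (Fin a) (Fin c) ℂ)
    (h : LinearMap.range F.mulVecLin ≤ LinearMap.range N.mulVecLin) :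
    ∃ C : Matrix (Fin b) (Fin c) ℂ, N * C = F := by
  have hcol : ∀ j : Fin c, ∃ y : Fin b → ℂ, N.mulVec y = fun i => F i j := by
    intro j
    have : F.mulVec (Pi.single j 1) ∈ LinearMap.range F.mulVecLin := ⟨Pi.single j 1, rfl⟩
    obtain ⟨y, hy⟩ := h this
    exact ⟨y, by simp at hy; exact hy⟩
  choose c hc using hcol
  refine ⟨Matrix.of fun i j => c j i, ?_⟩
  ext i j
  have := congrFun (hc j) i
  simpa [Matrix.mul_apply, Matrix.mulVec, dotProduct] using this

theorem stmt15 {nc : ℕ} (A B : Matrix (Fin n) (Fin n) ℂ) (hA : IsUnit A.det)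
    (hB : B.PosDef) (R P : Matrix (Fin n) (Fin nc) ℂ)
    (hAc : IsUnit (Rᴴ * A * P).det) :
    let Pi := P * (Rᴴ * A * P)⁻¹ * Rᴴ * A
    (Pi = B⁻¹ * Piᴴ * B ↔
      LinearMap.range P.mulVecLin = LinearMap.range (B⁻¹ * Aᴴ * R).mulVecLin) := by
  intro Pi
  set Ac := Rᴴ * A * P with hAcdef
  have hAc' : IsUnit Acᴴ.det := by
    rw [Matrix.det_conjTranspose]
    exact hAc.star
  have hinv1 : Ac⁻¹ * Ac = 1 := Matrix.nonsing_inv_mul _ hAc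
  have hinv2 : Ac * Ac⁻¹ = 1 := Matrix.mul_nonsing_inv _ hAc
  have hinv3 : (Acᴴ)⁻¹ * Acᴴ = 1 := Matrix.nonsing_inv_mul _ hAc'
  have hinv4 : Acᴴ * (Acᴴ)⁻¹ = 1 := Matrix.mul_nonsing_inv _ hAc'
  have hBH : Bᴴ = B := hB.isHermitian
  have hBdet : IsUnit B.det := (Matrix.isUnit_iff_isUnit_det B).mp hB.isUnit
  have hB1 : B * B⁻¹ = 1 := Matrix.mul_nonsing_inv _ hBdet
  have hB2 : B⁻¹ * B = 1 := Matrix.nonsing_inv_mul _ hBdet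
  have hPiH : Piᴴ = Aᴴ * R * (Acᴴ)⁻¹ * Pᴴ := by
    show (P * Ac⁻¹ * Rᴴ * A)ᴴ = _
    simp [Matrix.conjTranspose_mul, Matrix.conjTranspose_nonsing_inv, Matrix.mul_assoc]
  have hPiP : Pi * P = P := by
    show P * Ac⁻¹ * Rᴴ * A * P = P
    calc P * Ac⁻¹ * Rᴴ * A * P = P * (Ac⁻¹ * Ac) := by
          rw [hAcdef]; simp only [Matrix.mul_assoc]
      _ = P := by rw [hinv1, Matrix.mul_one]
  constructor
  · -- forward
    intro h
    have hrPi : LinearMap.range Pi.mulVecLin = LinearMap.range P.mulVecLin :=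
      rangeEqAux Pi P (Ac⁻¹ * Rᴴ * A) (by show P * Ac⁻¹ * Rᴴ * A = _; simp only [Matrix.mul_assoc]) hPiP
    have hQfix : (B⁻¹ * Piᴴ * B) * (B⁻¹ * Aᴴ * R) = B⁻¹ * Aᴴ * R := by
      rw [hPiH]
      calc B⁻¹ * (Aᴴ * R * (Acᴴ)⁻¹ * Pᴴ) * B * (B⁻¹ * Aᴴ * R)
          = B⁻¹ * (Aᴴ * R) * ((Acᴴ)⁻¹ * (Pᴴ * ((B * B⁻¹) * (Aᴴ * R)))) := by
            simp only [Matrix.mul_assoc]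
        _ = B⁻¹ * (Aᴴ * R) * ((Acᴴ)⁻¹ * Acᴴ) := by
            rw [hB1, Matrix.one_mul]
            congr 2
            rw [hAcdef]
            simp [Matrix.conjTranspose_mul, Matrix.mul_assoc]
        _ = B⁻¹ * Aᴴ * R := by rw [hinv3, Matrix.mul_one, Matrix.mul_assoc]
    have hrQ : LinearMap.range (B⁻¹ * Piᴴ * B).mulVecLin
        = LinearMap.range (B⁻¹ * Aᴴ * R).mulVecLin := by
      refine rangeEqAux _ _ ((Acᴴ)⁻¹ * Pᴴ * B) ?_ hQfix
      rw [hPiH]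
      simp only [Matrix.mul_assoc]
    rw [← hrPi, h, hrQ]
  · -- converse
    intro h
    obtain ⟨C, hC⟩ := existsFactor P (B⁻¹ * Aᴴ * R) h.ge
    have hAR : Aᴴ * R = B * (P * C) := by
      rw [hC]
      calc Aᴴ * R = (B * B⁻¹) * (Aᴴ * R) := by rw [hB1, Matrix.one_mul]
        _ = B * (B⁻¹ * Aᴴ * R) := by simp only [Matrix.mul_assoc]
    have hRA : Rᴴ * A = Cᴴ * (Pᴴ * B) := by
      have := congrArg Matrix.conjTranspose hAR
      simpa [Matrix.conjTranspose_mul, hBH, Matrix.mul_assoc] using this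
    have hAcC : Ac = Cᴴ * (Pᴴ * B * P) := by
      rw [hAcdef, hRA]; simp only [Matrix.mul_assoc]
    have herm : Ac * C = Cᴴ * Acᴴ := by
      rw [hAcC]
      have : (Cᴴ * (Pᴴ * B * P) * C)ᴴ = Cᴴ * (Pᴴ * B * P) * C := by
        simp [Matrix.conjTranspose_mul, hBH, Matrix.mul_assoc]
      calc Cᴴ * (Pᴴ * B * P) * C = (Cᴴ * (Pᴴ * B * P) * C)ᴴ := this.symm
        _ = Cᴴ * (Cᴴ * (Pᴴ * B * P))ᴴ := by
            rw [Matrix.conjTranspose_mul]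
    have hcomm : Ac⁻¹ * Cᴴ = C * (Acᴴ)⁻¹ := by
      calc Ac⁻¹ * Cᴴ = Ac⁻¹ * Cᴴ * (Acᴴ * (Acᴴ)⁻¹) := by rw [hinv4, Matrix.mul_one]
        _ = Ac⁻¹ * (Cᴴ * Acᴴ) * (Acᴴ)⁻¹ := by simp only [Matrix.mul_assoc]
        _ = Ac⁻¹ * (Ac * C) * (Acᴴ)⁻¹ := by rw [herm]
        _ = (Ac⁻¹ * Ac) * C * (Acᴴ)⁻¹ := by simp only [Matrix.mul_assoc]
        _ = C * (Acᴴ)⁻¹ := by rw [hinv1, Matrix.one_mul]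
    -- now both sides equal  P * (Ac⁻¹ * Cᴴ) * (Pᴴ * B)
    have lhs_eq : Pi = P * (Ac⁻¹ * Cᴴ) * (Pᴴ * B) := by
      show P * Ac⁻¹ * Rᴴ * A = _
      rw [Matrix.mul_assoc (P * Ac⁻¹) Rᴴ A, Matrix.mul_assoc P Ac⁻¹ (Rᴴ * A), hRA]
      simp only [Matrix.mul_assoc]
    have rhs_eq : B⁻¹ * Piᴴ * B = P * (C * (Acᴴ)⁻¹) * (Pᴴ * B) := by
      rw [hPiH, hAR]
      calc B⁻¹ * (B * (P * C) * (Acᴴ)⁻¹ * Pᴴ) * B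
          = (B⁻¹ * B) * (P * C * ((Acᴴ)⁻¹ * (Pᴴ * B))) := by simp only [Matrix.mul_assoc]
        _ = P * (C * (Acᴴ)⁻¹) * (Pᴴ * B) := by
            rw [hB2, Matrix.one_mul]; simp only [Matrix.mul_assoc]
    rw [rhs_eq, lhs_eq, hcomm]
end
end

section
/- Let A be nonsingular, R, P ∈ ℂⁿˣⁿᶜ with RᴴAP nonsingular, B HPD, and Π_A = P(RᴴAP)⁻¹RᴴA. Then Π_A is B-orthogonal if and only if ker(RᴴA) = ker(PᴴB). -/
open Matrix ComplexOrder

noncomputable section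

variable {n : ℕ}

private lemma ext_mulVec'' {m k : ℕ} {X Y : Matrix (Fin m) (Fin k) ℂ}
    (h : ∀ v, X *ᵥ v = Y *ᵥ v) : X = Y := by
  ext i j
  have := congrFun (h (Pi.single j 1)) i
  simpa [Matrix.mulVec_single] using this

private lemma aux16 {n nc : ℕ} (A B : Matrix (Fin n) (Fin n) ℂ) (hA : IsUnit A.det)
    (hB : B.PosDef) (R P : Matrix (Fin n) (Fin nc) ℂ)
    (hAc : IsUnit (Rᴴ * A * P).det) :
    (P * (Rᴴ * A * P)⁻¹ * Rᴴ * A =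
        B⁻¹ * (P * (Rᴴ * A * P)⁻¹ * Rᴴ * A)ᴴ * B ↔
      LinearMap.ker (Rᴴ * A).mulVecLin = LinearMap.ker (Pᴴ * B).mulVecLin) := by
  set Pi : Matrix (Fin n) (Fin n) ℂ := P * (Rᴴ * A * P)⁻¹ * Rᴴ * A with hPidef
  have hBdet : IsUnit B.det := isUnit_iff_ne_zero.mpr hB.det_pos.ne'
  have hBH : Bᴴ = B := hB.isHermitian.eq
  have hBinj : Function.Injective B.mulVec :=
    mulVec_injective_iff_isUnit.mpr ((isUnit_iff_isUnit_det B).mpr hBdet)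
  have hAHinj : Function.Injective (Aᴴ).mulVec :=
    mulVec_injective_iff_isUnit.mpr ((isUnit_conjTranspose _).mpr ((isUnit_iff_isUnit_det A).mpr hA))
  have key1 : Rᴴ * A * Pi = Rᴴ * A := by
    rw [hPidef]
    calc Rᴴ * A * (P * (Rᴴ * A * P)⁻¹ * Rᴴ * A)
        = (Rᴴ * A * P * (Rᴴ * A * P)⁻¹) * (Rᴴ * A) := by simp only [Matrix.mul_assoc]
      _ = Rᴴ * A := by rw [Matrix.mul_nonsing_inv _ hAc, Matrix.one_mul]
  have hPi2 : Pi = (P * (Rᴴ * A * P)⁻¹) * (Rᴴ * A) := by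
    rw [hPidef]; simp only [Matrix.mul_assoc]
  have hE : Piᴴ * B = Aᴴ * (R * ((Rᴴ * A * P)⁻¹ᴴ * (Pᴴ * B))) := by
    rw [hPidef]
    simp only [conjTranspose_mul, conjTranspose_conjTranspose, Matrix.mul_assoc]
  have h4 : Pᴴ * Aᴴ * R * ((Rᴴ * A * P)⁻¹ᴴ * (Pᴴ * B)) = Pᴴ * B := by
    have h1 : (Rᴴ * A * P)ᴴ * (Rᴴ * A * P)⁻¹ᴴ = 1 := by
      rw [← conjTranspose_mul, Matrix.nonsing_inv_mul _ hAc, conjTranspose_one]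
    calc Pᴴ * Aᴴ * R * ((Rᴴ * A * P)⁻¹ᴴ * (Pᴴ * B))
        = ((Rᴴ * A * P)ᴴ * (Rᴴ * A * P)⁻¹ᴴ) * (Pᴴ * B) := by
          simp only [conjTranspose_mul, conjTranspose_conjTranspose, Matrix.mul_assoc]
      _ = Pᴴ * B := by rw [h1, Matrix.one_mul]
  -- the kernel of Πᴴ B equals the kernel of Pᴴ B, pointwise
  have kerE : ∀ x : Fin n → ℂ, (Piᴴ * B) *ᵥ x = 0 ↔ (Pᴴ * B) *ᵥ x = 0 := by
    intro x
    constructor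
    · intro hx
      rw [hE, ← Matrix.mulVec_mulVec] at hx
      have h1 : R *ᵥ ((Rᴴ * A * P)⁻¹ᴴ * (Pᴴ * B)) *ᵥ x = 0 := by
        apply hAHinj
        rw [Matrix.mulVec_mulVec x R, Matrix.mulVec_zero]
        exact hx
      have h2 : (Pᴴ * Aᴴ) *ᵥ (R *ᵥ ((Rᴴ * A * P)⁻¹ᴴ * (Pᴴ * B)) *ᵥ x) = 0 := by
        rw [h1, Matrix.mulVec_zero]
      rwa [Matrix.mulVec_mulVec, Matrix.mulVec_mulVec, h4] at h2
    · intro hx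
      rw [hE, ← Matrix.mulVec_mulVec, ← Matrix.mulVec_mulVec, ← Matrix.mulVec_mulVec, hx]
      simp
  constructor
  · intro h
    have hBPi : B * Pi = Piᴴ * B := by
      calc B * Pi = B * (B⁻¹ * Piᴴ * B) := by rw [← h]
        _ = (B * B⁻¹) * (Piᴴ * B) := by simp only [Matrix.mul_assoc]
        _ = Piᴴ * B := by rw [Matrix.mul_nonsing_inv _ hBdet, Matrix.one_mul]
    ext x
    simp only [LinearMap.mem_ker, Matrix.mulVecLin_apply]
    constructor
    · intro hx
      have hPix : Pi *ᵥ x = 0 := by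
        rw [hPi2, ← Matrix.mulVec_mulVec, hx, Matrix.mulVec_zero]
      have : (Piᴴ * B) *ᵥ x = 0 := by
        rw [← hBPi, ← Matrix.mulVec_mulVec, hPix, Matrix.mulVec_zero]
      exact (kerE x).mp this
    · intro hx
      have h1 : (Piᴴ * B) *ᵥ x = 0 := (kerE x).mpr hx
      have h2 : B *ᵥ (Pi *ᵥ x) = 0 := by
        rw [Matrix.mulVec_mulVec, hBPi, h1]
      have hPix : Pi *ᵥ x = 0 := by
        apply hBinj; rw [h2, Matrix.mulVec_zero]
      calc (Rᴴ * A) *ᵥ x = (Rᴴ * A * Pi) *ᵥ x := by rw [key1]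
        _ = (Rᴴ * A) *ᵥ (Pi *ᵥ x) := by rw [Matrix.mulVec_mulVec]
        _ = 0 := by rw [hPix, Matrix.mulVec_zero]
  · intro hker
    have hker' : ∀ x : Fin n → ℂ, (Rᴴ * A) *ᵥ x = 0 ↔ (Pᴴ * B) *ᵥ x = 0 := by
      intro x
      have := Submodule.ext_iff.mp hker x
      simpa [LinearMap.mem_ker, Matrix.mulVecLin_apply] using this
    have hsym : Piᴴ * B * Pi = Piᴴ * B := by
      apply ext_mulVec''
      intro v
      have h1 : (Rᴴ * A) *ᵥ (v - Pi *ᵥ v) = 0 := by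
        rw [Matrix.mulVec_sub, Matrix.mulVec_mulVec, key1, sub_self]
      have h2 : (Piᴴ * B) *ᵥ (v - Pi *ᵥ v) = 0 := (kerE _).mpr ((hker' _).mp h1)
      rw [Matrix.mulVec_sub] at h2
      have h3 : (Piᴴ * B) *ᵥ (Pi *ᵥ v) = (Piᴴ * B) *ᵥ v := by
        have := sub_eq_zero.mp h2
        linear_combination (norm := module) this.symm
      calc (Piᴴ * B * Pi) *ᵥ v = (Piᴴ * B) *ᵥ (Pi *ᵥ v) := by rw [Matrix.mulVec_mulVec]
        _ = (Piᴴ * B) *ᵥ v := h3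
    have hherm : (Piᴴ * B)ᴴ = Piᴴ * B := by
      calc (Piᴴ * B)ᴴ = (Piᴴ * B * Pi)ᴴ := by rw [hsym]
        _ = Piᴴ * B * Pi := by
            simp only [conjTranspose_mul, conjTranspose_conjTranspose, hBH, Matrix.mul_assoc]
        _ = Piᴴ * B := hsym
    have hBPi : B * Pi = Piᴴ * B := by
      rw [conjTranspose_mul, conjTranspose_conjTranspose, hBH] at hherm
      exact hherm
    calc Pi = (B⁻¹ * B) * Pi := by rw [Matrix.nonsing_inv_mul _ hBdet, Matrix.one_mul]
      _ = B⁻¹ * (B * Pi) := by rw [Matrix.mul_assoc]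
      _ = B⁻¹ * (Piᴴ * B) := by rw [hBPi]
      _ = B⁻¹ * Piᴴ * B := by rw [Matrix.mul_assoc]

theorem stmt16 {nc : ℕ} (A B : Matrix (Fin n) (Fin n) ℂ) (hA : IsUnit A.det)
    (hB : B.PosDef) (R P : Matrix (Fin n) (Fin nc) ℂ)
    (hAc : IsUnit (Rᴴ * A * P).det) :
    let Pi := P * (Rᴴ * A * P)⁻¹ * Rᴴ * A
    (Pi = B⁻¹ * Piᴴ * B ↔
      LinearMap.ker (Rᴴ * A).mulVecLin = LinearMap.ker (Pᴴ * B).mulVecLin) := by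
  intro Pi
  exact aux16 A B hA hB R P hAc
end
end

section
/- Let M̃⁻¹ = M⁻¹AB⁻¹ + B⁻¹AᴴM⁻ᴴ − B⁻¹AᴴM⁻ᴴBM⁻¹AB⁻¹. Then ‖I − M⁻¹A‖_B < 1 if and only if M̃⁻¹ is Hermitian positive definite. -/
open Matrix ComplexOrder

noncomputable section

variable {n : ℕ}

lemma binner_self_nonneg {B : Matrix (Fin n) (Fin n) ℂ} (hB : B.PosDef) (x : Fin n → ℂ) :
    0 ≤ binner B x x := hB.posSemidef.dotProduct_mulVec_nonneg x

lemma binner_self_im {B : Matrix (Fin n) (Fin n) ℂ} (hB : B.PosDef) (x : Fin n → ℂ) :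
    (binner B x x).im = 0 := ((Complex.nonneg_iff.mp (binner_self_nonneg hB x)).2).symm

lemma binner_self_re_nonneg {B : Matrix (Fin n) (Fin n) ℂ} (hB : B.PosDef) (x : Fin n → ℂ) :
    0 ≤ (binner B x x).re := (Complex.nonneg_iff.mp (binner_self_nonneg hB x)).1

lemma binner_self_re_pos {B : Matrix (Fin n) (Fin n) ℂ} (hB : B.PosDef) {x : Fin n → ℂ}
    (hx : x ≠ 0) : 0 < (binner B x x).re := hB.re_dotProduct_pos hx

lemma bVecNorm_pos {B : Matrix (Fin n) (Fin n) ℂ} (hB : B.PosDef) {x : Fin n → ℂ}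
    (hx : x ≠ 0) : 0 < bVecNorm B x := Real.sqrt_pos.mpr (binner_self_re_pos hB hx)

lemma binner_smul (B : Matrix (Fin n) (Fin n) ℂ) (c : ℝ) (x : Fin n → ℂ) :
    binner B ((c : ℂ) • x) ((c : ℂ) • x) = (c^2 : ℂ) * binner B x x := by
  simp only [binner, Matrix.mulVec_smul, star_smul, smul_dotProduct, dotProduct_smul,
    star_trivial, smul_eq_mul]
  rw [show star (c:ℂ) = (c:ℂ) from Complex.conj_ofReal c]
  ring

lemma bVecNorm_smul (B : Matrix (Fin n) (Fin n) ℂ) {c : ℝ} (hc : 0 ≤ c) (x : Fin n → ℂ) :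
    bVecNorm B ((c : ℂ) • x) = c * bVecNorm B x := by
  rw [bVecNorm, binner_smul]
  rw [show ((c:ℂ)^2) = ((c^2 : ℝ) : ℂ) by push_cast; ring, Complex.re_ofReal_mul,
    Real.sqrt_mul (sq_nonneg c), Real.sqrt_sq hc]
  rfl

lemma continuous_bVecNorm_mulVec (B C : Matrix (Fin n) (Fin n) ℂ) :
    Continuous fun x : Fin n → ℂ => bVecNorm B (C.mulVec x) := by
  apply Real.continuous_sqrt.comp
  apply Complex.continuous_re.comp
  simp only [binner, Matrix.mulVec, dotProduct, Pi.star_apply]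
  fun_prop

lemma bVecNorm_zero (B : Matrix (Fin n) (Fin n) ℂ) : bVecNorm B 0 = 0 := by
  simp [bVecNorm, binner]

lemma bVecNorm_ne_zero_arg {B : Matrix (Fin n) (Fin n) ℂ} {x : Fin n → ℂ}
    (h : bVecNorm B x = 1) : x ≠ 0 := by
  intro h0; rw [h0, bVecNorm_zero] at h; norm_num at h

lemma bNorm_lt_one_iff {B : Matrix (Fin n) (Fin n) ℂ} (hB : B.PosDef)
    (C : Matrix (Fin n) (Fin n) ℂ) :
    bNorm B C < 1 ↔ ∀ x : Fin n → ℂ, x ≠ 0 → bVecNorm B (C.mulVec x) < bVecNorm B x := by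
  classical
  set S : Set ℝ := {r : ℝ | ∃ x : Fin n → ℂ, bVecNorm B x = 1 ∧ r = bVecNorm B (C.mulVec x)}
    with hSdef
  have hbn : bNorm B C = sSup S := rfl
  rcases Nat.eq_zero_or_pos n with hn | hn
  · subst hn
    have hS0 : S = ∅ := by
      ext r
      simp only [hSdef, Set.mem_setOf_eq, Set.mem_empty_iff_false, iff_false, not_exists]
      rintro x ⟨h1, -⟩
      exact bVecNorm_ne_zero_arg h1 (Subsingleton.elim x 0)
    rw [hbn, hS0, Real.sSup_empty]
    constructor
    · intro _ x hx; exact absurd (Subsingleton.elim x 0) hx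
    · intro _; norm_num
  · haveI : Nonempty (Fin n) := Fin.pos_iff_nonempty.mp hn
    haveI : Nontrivial (Fin n → ℂ) := inferInstance
    set f : (Fin n → ℂ) → ℝ := fun x => bVecNorm B (C.mulVec x) / bVecNorm B x with hfdef
    have hcont : Continuous fun x : Fin n → ℂ => bVecNorm B x := by
      have := continuous_bVecNorm_mulVec B 1
      simpa [Matrix.one_mulVec] using this
    have hfc : ContinuousOn f (Metric.sphere (0 : Fin n → ℂ) 1) := by
      apply ContinuousOn.div
      · exact (continuous_bVecNorm_mulVec B C).continuousOn
      · exact hcont.continuousOn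
      · intro x hx
        have hx0 : x ≠ 0 := by
          intro h0
          rw [Metric.mem_sphere, h0] at hx
          simp at hx
        exact (bVecNorm_pos hB hx0).ne'
    have hSK : S = f '' Metric.sphere (0 : Fin n → ℂ) 1 := by
      ext r
      constructor
      · rintro ⟨x, hx1, rfl⟩
        have hx0 : x ≠ 0 := bVecNorm_ne_zero_arg hx1
        have hnx : (0:ℝ) < ‖x‖ := norm_pos_iff.mpr hx0
        refine ⟨((‖x‖⁻¹ : ℝ) : ℂ) • x, ?_, ?_⟩
        · rw [mem_sphere_zero_iff_norm, norm_smul]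
          simp [abs_of_nonneg (inv_nonneg.mpr hnx.le), inv_mul_cancel₀ hnx.ne']
        · rw [hfdef]
          simp only [Matrix.mulVec_smul]
          rw [bVecNorm_smul B (inv_nonneg.mpr hnx.le), bVecNorm_smul B (inv_nonneg.mpr hnx.le),
            mul_div_mul_left _ _ (inv_ne_zero hnx.ne'), hx1, div_one]
      · rintro ⟨x, hxs, rfl⟩
        have hx0 : x ≠ 0 := by
          intro h0
          rw [Metric.mem_sphere, h0] at hxs
          simp at hxs
        have hb : 0 < bVecNorm B x := bVecNorm_pos hB hx0
        refine ⟨(((bVecNorm B x)⁻¹ : ℝ) : ℂ) • x, ?_, ?_⟩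
        · rw [bVecNorm_smul B (inv_nonneg.mpr hb.le), inv_mul_cancel₀ hb.ne']
        · rw [show C.mulVec ((((bVecNorm B x)⁻¹:ℝ):ℂ) • x)
              = (((bVecNorm B x)⁻¹:ℝ):ℂ) • C.mulVec x from Matrix.mulVec_smul C _ x,
            bVecNorm_smul B (inv_nonneg.mpr hb.le), hfdef]
          simp only
          rw [div_eq_inv_mul]
    have hK : IsCompact (f '' Metric.sphere (0 : Fin n → ℂ) 1) :=
      (isCompact_sphere (0 : Fin n → ℂ) 1).image_of_continuousOn hfc
    have hSne : S.Nonempty := by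
      rw [hSK]
      exact (NormedSpace.sphere_nonempty.mpr zero_le_one).image f
    have hbdd : BddAbove S := hSK ▸ hK.bddAbove
    have hmem : sSup S ∈ S := by
      rw [hSK] at hSne ⊢
      exact hK.sSup_mem hSne
    constructor
    · intro h x hx
      have hb : 0 < bVecNorm B x := bVecNorm_pos hB hx
      have hmemS : (bVecNorm B x)⁻¹ * bVecNorm B (C.mulVec x) ∈ S := by
        refine ⟨(((bVecNorm B x)⁻¹ : ℝ) : ℂ) • x, ?_, ?_⟩
        · rw [bVecNorm_smul B (inv_nonneg.mpr hb.le), inv_mul_cancel₀ hb.ne']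
        · rw [show C.mulVec ((((bVecNorm B x)⁻¹:ℝ):ℂ) • x)
              = (((bVecNorm B x)⁻¹:ℝ):ℂ) • C.mulVec x from Matrix.mulVec_smul C _ x,
            bVecNorm_smul B (inv_nonneg.mpr hb.le)]
      have hle : (bVecNorm B x)⁻¹ * bVecNorm B (C.mulVec x) < 1 :=
        lt_of_le_of_lt (le_csSup hbdd hmemS) (hbn ▸ h)
      calc bVecNorm B (C.mulVec x)
          = bVecNorm B x * ((bVecNorm B x)⁻¹ * bVecNorm B (C.mulVec x)) := by
            field_simp
        _ < bVecNorm B x * 1 := by exact mul_lt_mul_of_pos_left hle hb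
        _ = bVecNorm B x := mul_one _
    · intro h
      obtain ⟨x, hx1, hx2⟩ := hmem
      rw [hbn, hx2, ← hx1]
      exact h x (bVecNorm_ne_zero_arg hx1)

lemma sub_pos_complex {a b : ℂ} (ha : a.im = 0) (hb : b.im = 0) :
    0 < a - b ↔ b.re < a.re := by
  rw [Complex.lt_def]
  simp [Complex.sub_re, Complex.sub_im, ha, hb]

theorem stmt17 (A B M : Matrix (Fin n) (Fin n) ℂ) (hA : IsUnit A.det)
    (hM : IsUnit M.det) (hB : B.PosDef) :
    bNorm B (1 - M⁻¹ * A) < 1 ↔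
      (M⁻¹ * A * B⁻¹ + B⁻¹ * Aᴴ * (Mᴴ)⁻¹ - B⁻¹ * Aᴴ * (Mᴴ)⁻¹ * B * M⁻¹ * A * B⁻¹).PosDef := by
  classical
  set E : Matrix (Fin n) (Fin n) ℂ := 1 - M⁻¹ * A with hE
  have hBdet : IsUnit B.det := hB.det_pos.ne'.isUnit
  have h1 : B⁻¹ * B = 1 := nonsing_inv_mul B hBdet
  have h2 : B * B⁻¹ = 1 := mul_nonsing_inv B hBdet
  have h1' : ∀ X : Matrix (Fin n) (Fin n) ℂ, B⁻¹ * (B * X) = X := fun X => by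
    rw [← Matrix.mul_assoc, h1, Matrix.one_mul]
  have h2' : ∀ X : Matrix (Fin n) (Fin n) ℂ, B * (B⁻¹ * X) = X := fun X => by
    rw [← Matrix.mul_assoc, h2, Matrix.one_mul]
  have hEH : Eᴴ = 1 - Aᴴ * (Mᴴ)⁻¹ := by
    rw [hE, conjTranspose_sub, conjTranspose_one, conjTranspose_mul, conjTranspose_nonsing_inv]
  set T : Matrix (Fin n) (Fin n) ℂ :=
    M⁻¹ * A * B⁻¹ + B⁻¹ * Aᴴ * (Mᴴ)⁻¹ - B⁻¹ * Aᴴ * (Mᴴ)⁻¹ * B * M⁻¹ * A * B⁻¹ with hTdef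
  have hT : T = B⁻¹ - B⁻¹ * Eᴴ * B * E * B⁻¹ := by
    rw [hTdef, hEH, hE]
    simp only [Matrix.mul_sub, Matrix.sub_mul, Matrix.mul_assoc, h1', h2', h1, h2,
      Matrix.mul_one, Matrix.one_mul]
    abel
  have hBTB : B * T * B = B - Eᴴ * B * E := by
    rw [hT]
    simp only [Matrix.mul_sub, Matrix.sub_mul, Matrix.mul_assoc, h1', h2', h1, h2,
      Matrix.mul_one, Matrix.one_mul]
  have hBinvH : B⁻¹ᴴ = B⁻¹ := by rw [conjTranspose_nonsing_inv, hB.1.eq]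
  have hherm : T.IsHermitian := by
    rw [Matrix.IsHermitian, hT]
    simp only [conjTranspose_sub, conjTranspose_mul, conjTranspose_conjTranspose, hBinvH,
      hB.1.eq, Matrix.mul_assoc]
  have hquad : ∀ y : Fin n → ℂ,
      star (B.mulVec y) ⬝ᵥ T.mulVec (B.mulVec y)
        = binner B y y - binner B (E.mulVec y) (E.mulVec y) := by
    intro y
    rw [binner, binner, star_mulVec, ← dotProduct_mulVec, mulVec_mulVec, mulVec_mulVec,
      hB.1.eq, hBTB, Matrix.sub_mulVec, dotProduct_sub]
    congr 1
    rw [star_mulVec, ← dotProduct_mulVec, mulVec_mulVec, mulVec_mulVec, Matrix.mul_assoc]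
  have hBy : ∀ y : Fin n → ℂ, y ≠ 0 → B.mulVec y ≠ 0 := by
    intro y hy hc
    apply hy
    have : B⁻¹.mulVec (B.mulVec y) = 0 := by rw [hc, Matrix.mulVec_zero]
    rwa [mulVec_mulVec, h1, Matrix.one_mulVec] at this
  have hkey : ∀ y : Fin n → ℂ, y ≠ 0 →
      (0 < star (B.mulVec y) ⬝ᵥ T.mulVec (B.mulVec y) ↔
        bVecNorm B (E.mulVec y) < bVecNorm B y) := by
    intro y hy
    rw [hquad y, sub_pos_complex (binner_self_im hB y) (binner_self_im hB (E.mulVec y)),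
      bVecNorm, bVecNorm, ← Real.sqrt_lt_sqrt_iff (binner_self_re_nonneg hB (E.mulVec y))]
  rw [bNorm_lt_one_iff hB]
  constructor
  · intro h
    refine PosDef.of_dotProduct_mulVec_pos hherm ?_
    intro x hx
    set y : Fin n → ℂ := B⁻¹.mulVec x with hy
    have hxy : x = B.mulVec y := by
      rw [hy, mulVec_mulVec, h2, Matrix.one_mulVec]
    have hy0 : y ≠ 0 := by
      intro h0
      apply hx
      rw [hxy, h0, Matrix.mulVec_zero]
    rw [hxy]
    exact (hkey y hy0).2 (h y hy0)
  · intro hp y hy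
    exact (hkey y hy).1 (hp.dotProduct_mulVec_pos (x := B.mulVec y) (hBy y hy))
end
end

section
/- Let M̂⁻¹ = M⁻¹AB⁻¹ + B⁻¹AᴴM⁻ᴴ − M⁻¹AB⁻¹AᴴM⁻ᴴ. Then ‖I − M⁻¹A‖_B < 1 if and only if all eigenvalues of M̂⁻¹B lie in the real interval (0, 1]. -/
open Matrix ComplexOrder

noncomputable section

variable {n : ℕ}

set_option maxHeartbeats 1000000 in
theorem euclid_aux (hn : n ≠ 0) (W : Matrix (Fin n) (Fin n) ℂ) :
    sSup {r : ℝ | ∃ y : EuclideanSpace ℂ (Fin n), ‖y‖ = 1 ∧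
        r = ‖toEuclideanCLM (𝕜 := ℂ) W y‖} < 1 ↔
      ∀ (lam : ℂ) (y : EuclideanSpace ℂ (Fin n)), y ≠ 0 →
        toEuclideanCLM (𝕜 := ℂ) (W * Wᴴ) y = lam • y →
        lam.im = 0 ∧ 0 ≤ lam.re ∧ lam.re < 1 := by
  classical
  set G : EuclideanSpace ℂ (Fin n) →L[ℂ] EuclideanSpace ℂ (Fin n) := toEuclideanCLM (𝕜 := ℂ) W with hG
  set SG : Set ℝ := {r : ℝ | ∃ y : EuclideanSpace ℂ (Fin n), ‖y‖ = 1 ∧ r = ‖G y‖} with hSG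
  have hKapp : ∀ y : EuclideanSpace ℂ (Fin n), toEuclideanCLM (𝕜 := ℂ) (W * Wᴴ) y
      = G (ContinuousLinearMap.adjoint G y) := by
    intro y
    rw [_root_.map_mul, ← Matrix.star_eq_conjTranspose, map_star,
      ← ContinuousLinearMap.star_eq_adjoint]
    rfl
  have hbdd : BddAbove SG := by
    refine ⟨‖G‖, ?_⟩
    rintro r ⟨y, hy, rfl⟩
    calc ‖G y‖ ≤ ‖G‖ * ‖y‖ := G.le_opNorm y
    _ = ‖G‖ := by rw [hy, mul_one]
  have hGle : ∀ v : EuclideanSpace ℂ (Fin n), ‖G v‖ ≤ sSup SG * ‖v‖ := by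
    intro v
    rcases eq_or_ne v 0 with rfl | hv
    · simp
    · have hv' : (0 : ℝ) < ‖v‖ := norm_pos_iff.mpr hv
      have hu1 : ‖((‖v‖ : ℂ))⁻¹ • v‖ = 1 := by
        rw [norm_smul, norm_inv, Complex.norm_real, Real.norm_eq_abs, abs_of_pos hv',
          inv_mul_cancel₀ hv'.ne']
      have h1 : ‖G (((‖v‖ : ℂ))⁻¹ • v)‖ ≤ sSup SG := le_csSup hbdd ⟨_, hu1, rfl⟩
      have h2 : ‖G (((‖v‖ : ℂ))⁻¹ • v)‖ = ‖v‖⁻¹ * ‖G v‖ := by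
        rw [ContinuousLinearMap.map_smul, norm_smul, norm_inv, Complex.norm_real,
          Real.norm_eq_abs, abs_of_pos hv']
      rw [h2] at h1
      calc ‖G v‖ = (‖v‖⁻¹ * ‖G v‖) * ‖v‖ := by field_simp
      _ ≤ sSup SG * ‖v‖ := mul_le_mul_of_nonneg_right h1 hv'.le
  constructor
  · intro h lam y hy hKy
    rw [hKapp] at hKy
    have ha : (0:ℝ) < ‖y‖ := norm_pos_iff.mpr hy
    have h1 : (inner ℂ y (G (ContinuousLinearMap.adjoint G y)) : ℂ)
        = ((‖ContinuousLinearMap.adjoint G y‖ : ℝ) : ℂ) ^ 2 := by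
      rw [← ContinuousLinearMap.adjoint_inner_left, inner_self_eq_norm_sq_to_K]
      norm_cast
    have h2 : (inner ℂ y (G (ContinuousLinearMap.adjoint G y)) : ℂ)
        = lam * ((‖y‖ : ℝ) : ℂ) ^ 2 := by
      rw [hKy, inner_smul_right, inner_self_eq_norm_sq_to_K]
      norm_cast
    set b : ℝ := ‖ContinuousLinearMap.adjoint G y‖ with hb
    have hy2 : ((‖y‖ ^ 2 : ℝ) : ℂ) ≠ 0 := Complex.ofReal_ne_zero.mpr (by positivity)
    have hbl : ((b ^ 2 : ℝ) : ℂ) = lam * ((‖y‖ ^ 2 : ℝ) : ℂ) := by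
      push_cast
      rw [← h1, h2]
    have hlam : lam = ((b ^ 2 / ‖y‖ ^ 2 : ℝ) : ℂ) := by
      rw [Complex.ofReal_div, eq_div_iff hy2]
      exact hbl.symm
    have him : lam.im = 0 := by rw [hlam, Complex.ofReal_im]
    have hre : lam.re = b ^ 2 / ‖y‖ ^ 2 := by rw [hlam, Complex.ofReal_re]
    have hre0 : 0 ≤ lam.re := by rw [hre]; positivity
    refine ⟨him, hre0, ?_⟩
    have hb2 : b ^ 2 = lam.re * ‖y‖ ^ 2 := by
      rw [hre]; field_simp
    have hnl : ‖lam‖ = lam.re := by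
      rw [hlam, Complex.norm_real, Real.norm_eq_abs,
        abs_of_nonneg (by positivity : (0:ℝ) ≤ b ^ 2 / ‖y‖ ^ 2), Complex.ofReal_re]
    have hnorm1 : ‖G (ContinuousLinearMap.adjoint G y)‖ = lam.re * ‖y‖ := by
      rw [hKy, norm_smul, hnl]
    have hineq : lam.re * ‖y‖ ≤ sSup SG * b := by
      rw [← hnorm1]; exact hGle _
    rcases eq_or_lt_of_le hre0 with h0 | hpos
    · rw [← h0]; norm_num
    · have hbpos : 0 < b := by
        have h3 : 0 < b ^ 2 := by
          rw [hb2]; exact mul_pos hpos (by positivity)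
        nlinarith [h3, hb ▸ norm_nonneg (ContinuousLinearMap.adjoint G y)]
      have hs0 : 0 ≤ sSup SG := by nlinarith
      have hsq := mul_le_mul hineq hineq (by positivity) (mul_nonneg hs0 hbpos.le)
      have h6 : lam.re ≤ sSup SG ^ 2 := by
        have hyy : (0:ℝ) < lam.re * ‖y‖ ^ 2 := by positivity
        nlinarith [hsq, hb2]
      nlinarith [h6, h, hs0]
  · intro h
    by_contra hs
    push_neg at hs
    have hne : (Metric.sphere (0 : EuclideanSpace ℂ (Fin n)) 1).Nonempty := by
      refine ⟨EuclideanSpace.single ⟨0, Nat.pos_of_ne_zero hn⟩ 1, ?_⟩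
      rw [mem_sphere_zero_iff_norm, EuclideanSpace.norm_single, norm_one]
    obtain ⟨x₀, hx₀s, hmax⟩ := (isCompact_sphere (0 : EuclideanSpace ℂ (Fin n)) 1).exists_isMaxOn hne
      ((G.continuous.norm).continuousOn)
    have hx₀n : ‖x₀‖ = 1 := mem_sphere_zero_iff_norm.mp hx₀s
    have hx₀0 : x₀ ≠ 0 := by
      intro h0; rw [h0, norm_zero] at hx₀n; norm_num at hx₀n
    have hsup : sSup SG = ‖G x₀‖ := by
      apply le_antisymm
      · apply Real.sSup_le
        · rintro r ⟨y, hy, rfl⟩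
          exact hmax (mem_sphere_zero_iff_norm.mpr hy)
        · positivity
      · exact le_csSup hbdd ⟨x₀, hx₀n, rfl⟩
    have hs1 : (1:ℝ) ≤ ‖G x₀‖ := hsup ▸ hs
    have hsa : IsSelfAdjoint (star G * G) := IsSelfAdjoint.star_mul_self G
    have hre : ∀ x : EuclideanSpace ℂ (Fin n), (star G * G).reApplyInnerSelf x = ‖G x‖ ^ 2 := by
      intro x
      rw [ContinuousLinearMap.reApplyInnerSelf, ContinuousLinearMap.mul_apply,
        ContinuousLinearMap.star_eq_adjoint, ContinuousLinearMap.adjoint_inner_left,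
        inner_self_eq_norm_sq_to_K]
      norm_cast
    have hextr : IsMaxOn (star G * G).reApplyInnerSelf (Metric.sphere (0:EuclideanSpace ℂ (Fin n)) ‖x₀‖) x₀ := by
      rw [hx₀n]
      intro x hx
      have hmx : ‖G x‖ ≤ ‖G x₀‖ := hmax hx
      simp only [Set.mem_setOf_eq, hre]
      exact pow_le_pow_left₀ (norm_nonneg _) hmx 2
    have heig : (star G * G) x₀ = ((‖G x₀‖ ^ 2 : ℝ) : ℂ) • x₀ := by
      have h' := hsa.eq_smul_self_of_isLocalExtrOn (Or.inr hextr.localize)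
      have hray : (star G * G).rayleighQuotient x₀ = ‖G x₀‖ ^ 2 := by
        show (star G * G).reApplyInnerSelf x₀ / ‖x₀‖ ^ 2 = _
        rw [hre, hx₀n]
        norm_num
      rwa [hray] at h'
    have hy0 : G x₀ ≠ 0 := by
      intro h0; rw [h0, norm_zero] at hs1; linarith
    have hKy : toEuclideanCLM (𝕜 := ℂ) (W * Wᴴ) (G x₀)
        = ((‖G x₀‖ ^ 2 : ℝ) : ℂ) • (G x₀) := by
      rw [hKapp]
      have hadj : ContinuousLinearMap.adjoint G (G x₀) = ((‖G x₀‖ ^ 2 : ℝ) : ℂ) • x₀ := by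
        rw [← ContinuousLinearMap.mul_apply, ← ContinuousLinearMap.star_eq_adjoint, heig]
      rw [hadj, ContinuousLinearMap.map_smul]
    obtain ⟨-, -, hlt⟩ := h _ _ hy0 hKy
    rw [Complex.ofReal_re] at hlt
    nlinarith

open scoped MatrixOrder in
theorem psd_sqrt_exists {B : Matrix (Fin n) (Fin n) ℂ} (hB : B.PosDef) :
    ∃ S : Matrix (Fin n) (Fin n) ℂ, S.PosSemidef ∧ S * S = B :=
  ⟨CFC.sqrt B, Matrix.nonneg_iff_posSemidef.mp (CFC.sqrt_nonneg B),
    CFC.sqrt_mul_sqrt_self B (Matrix.nonneg_iff_posSemidef.mpr hB.posSemidef)⟩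

set_option maxHeartbeats 1000000 in
theorem stmt18 (A B M : Matrix (Fin n) (Fin n) ℂ) (hA : IsUnit A.det)
    (hM : IsUnit M.det) (hB : B.PosDef) :
    bNorm B (1 - M⁻¹ * A) < 1 ↔
      ∀ (mu : ℂ) (x : Fin n → ℂ), x ≠ 0 →
        ((M⁻¹ * A * B⁻¹ + B⁻¹ * Aᴴ * (Mᴴ)⁻¹ - M⁻¹ * A * B⁻¹ * Aᴴ * (Mᴴ)⁻¹) * B).mulVec x
          = mu • x →
        mu.im = 0 ∧ 0 < mu.re ∧ mu.re ≤ 1 := by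
  classical
  rcases eq_or_ne n 0 with rfl | hn
  · constructor
    · intro _ mu x hx _
      exact absurd (Subsingleton.elim x 0) hx
    · intro _
      have hempty : {r : ℝ | ∃ x : Fin 0 → ℂ, bVecNorm B x = 1 ∧
          r = bVecNorm B ((1 - M⁻¹ * A).mulVec x)} = ∅ := by
        ext r
        simp only [Set.mem_setOf_eq, Set.mem_empty_iff_false, iff_false, not_exists]
        rintro x ⟨h1, -⟩
        have hx0 : x = 0 := Subsingleton.elim x 0
        rw [hx0] at h1
        simp [bVecNorm, binner] at h1
      rw [bNorm, hempty, Real.sSup_empty]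
      norm_num
  · set Mi := (M⁻¹ * A * B⁻¹ + B⁻¹ * Aᴴ * (Mᴴ)⁻¹ - M⁻¹ * A * B⁻¹ * Aᴴ * (Mᴴ)⁻¹) * B with hMidef
    obtain ⟨S, hS, hSS⟩ := psd_sqrt_exists hB
    have hSH : Sᴴ = S := hS.isHermitian
    have hBdet : IsUnit B.det := (Matrix.isUnit_iff_isUnit_det B).mp hB.isUnit
    have hSdet : IsUnit S.det := by
      have h := hBdet
      rw [← hSS, Matrix.det_mul] at h
      exact (IsUnit.mul_iff.mp h).1
    have hSinvH : S⁻¹ᴴ = S⁻¹ := by rw [Matrix.conjTranspose_nonsing_inv, hSH]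
    have hBinv : B⁻¹ = S⁻¹ * S⁻¹ := by rw [← hSS, Matrix.mul_inv_rev]
    have c1 : ∀ X : Matrix (Fin n) (Fin n) ℂ, S⁻¹ * (S * X) = X := fun X =>
      Matrix.nonsing_inv_mul_cancel_left S X hSdet
    have c2 : ∀ X : Matrix (Fin n) (Fin n) ℂ, S * (S⁻¹ * X) = X := fun X =>
      Matrix.mul_nonsing_inv_cancel_left S X hSdet
    have c3 : S⁻¹ * S = 1 := Matrix.nonsing_inv_mul S hSdet
    have c4 : S * S⁻¹ = 1 := Matrix.mul_nonsing_inv S hSdet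
    set Eb := 1 - M⁻¹ * A with hEbdef
    set W := S * Eb * S⁻¹ with hWdef
    have hEbH : Ebᴴ = 1 - Aᴴ * (Mᴴ)⁻¹ := by
      rw [hEbdef]
      simp [Matrix.conjTranspose_sub, Matrix.conjTranspose_mul, Matrix.conjTranspose_one,
        Matrix.conjTranspose_nonsing_inv]
    have hN : M⁻¹ * A * B⁻¹ + B⁻¹ * Aᴴ * (Mᴴ)⁻¹ - M⁻¹ * A * B⁻¹ * Aᴴ * (Mᴴ)⁻¹
        = B⁻¹ - Eb * B⁻¹ * Ebᴴ := by
      rw [hEbH, hEbdef]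
      noncomm_ring
    have hWH : Wᴴ = S⁻¹ * Ebᴴ * S := by
      rw [hWdef, Matrix.conjTranspose_mul, Matrix.conjTranspose_mul, hSH, hSinvH,
        Matrix.mul_assoc]
    have hSMi : S * Mi = (1 - W * Wᴴ) * S := by
      rw [hMidef, hN, hWH, hWdef, hBinv, ← hSS]
      simp only [Matrix.sub_mul, Matrix.mul_sub, Matrix.one_mul, Matrix.mul_one,
        Matrix.mul_assoc, c1, c2, c3, c4]
    have hSunit : IsUnit S := (Matrix.isUnit_iff_isUnit_det S).mpr hSdet
    have hSinj : Function.Injective S.mulVec := Matrix.mulVec_injective_iff_isUnit.mpr hSunit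
    have hdot : ∀ x : Fin n → ℂ, star x ⬝ᵥ B *ᵥ x = star (S *ᵥ x) ⬝ᵥ (S *ᵥ x) := by
      intro x
      have : star (S *ᵥ x) ⬝ᵥ (S *ᵥ x) = star x ⬝ᵥ (B *ᵥ x) := by
        calc star (S *ᵥ x) ⬝ᵥ (S *ᵥ x)
            = (star x ᵥ* Sᴴ) ⬝ᵥ (S *ᵥ x) := by rw [Matrix.star_mulVec]
          _ = star x ⬝ᵥ (Sᴴ *ᵥ (S *ᵥ x)) := (Matrix.dotProduct_mulVec _ _ _).symm
          _ = star x ⬝ᵥ (B *ᵥ x) := by rw [Matrix.mulVec_mulVec, hSH, hSS]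
      exact this.symm
    have hkey : ∀ x : Fin n → ℂ,
        bVecNorm B x = ‖(WithLp.equiv 2 (Fin n → ℂ)).symm (S *ᵥ x)‖ := by
      intro x
      rw [bVecNorm, binner, hdot, @norm_eq_sqrt_re_inner ℂ, WithLp.equiv_symm_apply,
        EuclideanSpace.inner_toLp_toLp, dotProduct_comm]
      rfl
    have hact : ∀ x : Fin n → ℂ,
        toEuclideanCLM (𝕜 := ℂ) W ((WithLp.equiv 2 (Fin n → ℂ)).symm (S *ᵥ x))
          = (WithLp.equiv 2 (Fin n → ℂ)).symm (S *ᵥ (Eb *ᵥ x)) := by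
      intro x
      have hWS : W * S = S * Eb := by
        rw [hWdef, Matrix.mul_assoc, c3, Matrix.mul_one]
      rw [WithLp.equiv_symm_apply, Matrix.toEuclideanCLM_toLp, Matrix.mulVec_mulVec,
        hWS, ← Matrix.mulVec_mulVec]
    have hset : {r : ℝ | ∃ x : Fin n → ℂ, bVecNorm B x = 1 ∧ r = bVecNorm B (Eb.mulVec x)}
        = {r : ℝ | ∃ y : EuclideanSpace ℂ (Fin n), ‖y‖ = 1 ∧
            r = ‖toEuclideanCLM (𝕜 := ℂ) W y‖} := by
      ext r
      constructor
      · rintro ⟨x, h1, rfl⟩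
        refine ⟨(WithLp.equiv 2 (Fin n → ℂ)).symm (S *ᵥ x), ?_, ?_⟩
        · rw [← hkey]; exact h1
        · rw [hact, ← hkey]
      · rintro ⟨y, h1, rfl⟩
        refine ⟨S⁻¹ *ᵥ (WithLp.equiv 2 (Fin n → ℂ) y), ?_, ?_⟩
        · rw [hkey, Matrix.mulVec_mulVec, c4, Matrix.one_mulVec, Equiv.symm_apply_apply]
          exact h1
        · rw [hkey, ← hact, Matrix.mulVec_mulVec, c4, Matrix.one_mulVec,
            Equiv.symm_apply_apply]
    rw [bNorm, hset, euclid_aux hn W]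
    constructor
    · intro h mu x hx hMx
      have hSx0 : S *ᵥ x ≠ 0 := by
        intro h0
        apply hx
        apply hSinj
        rw [h0, Matrix.mulVec_zero]
      have hy0 : (WithLp.equiv 2 (Fin n → ℂ)).symm (S *ᵥ x) ≠ 0 := by
        intro h0
        apply hSx0
        have := congrArg (WithLp.equiv 2 (Fin n → ℂ)) h0
        simpa using this
      have hKx : (W * Wᴴ) *ᵥ (S *ᵥ x) = (1 - mu) • (S *ᵥ x) := by
        have h1 : S *ᵥ (Mi *ᵥ x) = (1 - W * Wᴴ) *ᵥ (S *ᵥ x) := by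
          rw [Matrix.mulVec_mulVec, hSMi, ← Matrix.mulVec_mulVec]
        rw [hMx, Matrix.mulVec_smul] at h1
        rw [Matrix.sub_mulVec, Matrix.one_mulVec] at h1
        have h2 : (W * Wᴴ) *ᵥ (S *ᵥ x) = S *ᵥ x - mu • (S *ᵥ x) := by
          rw [h1]; abel
        rw [h2, sub_smul, one_smul]
      have hKy : toEuclideanCLM (𝕜 := ℂ) (W * Wᴴ)
          ((WithLp.equiv 2 (Fin n → ℂ)).symm (S *ᵥ x))
            = (1 - mu) • (WithLp.equiv 2 (Fin n → ℂ)).symm (S *ᵥ x) := by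
        rw [WithLp.equiv_symm_apply, Matrix.toEuclideanCLM_toLp, hKx,
          WithLp.toLp_smul]
      obtain ⟨him, h0le, hlt⟩ := h (1 - mu) _ hy0 hKy
      simp only [Complex.sub_im, Complex.one_im, Complex.sub_re, Complex.one_re] at him h0le hlt
      refine ⟨by linarith, by linarith, by linarith⟩
    · intro h lam y hy0 hKy
      have hey0 : WithLp.equiv 2 (Fin n → ℂ) y ≠ 0 := by
        intro h0
        apply hy0
        have := congrArg (WithLp.equiv 2 (Fin n → ℂ)).symm h0
        simpa using this
      have hSx : S *ᵥ (S⁻¹ *ᵥ (WithLp.equiv 2 (Fin n → ℂ) y))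
          = WithLp.equiv 2 (Fin n → ℂ) y := by
        rw [Matrix.mulVec_mulVec, c4, Matrix.one_mulVec]
      have hx0 : S⁻¹ *ᵥ (WithLp.equiv 2 (Fin n → ℂ) y) ≠ 0 := by
        intro h0
        apply hey0
        rw [← hSx, h0, Matrix.mulVec_zero]
      have hKmat : (W * Wᴴ) *ᵥ (WithLp.equiv 2 (Fin n → ℂ) y)
          = lam • (WithLp.equiv 2 (Fin n → ℂ) y) := by
        have := congrArg (WithLp.equiv 2 (Fin n → ℂ)) hKy
        simpa [Matrix.toLin'_apply, WithLp.ofLp_smul] using this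
      have hMx : Mi *ᵥ (S⁻¹ *ᵥ (WithLp.equiv 2 (Fin n → ℂ) y))
          = (1 - lam) • (S⁻¹ *ᵥ (WithLp.equiv 2 (Fin n → ℂ) y)) := by
        apply hSinj
        rw [Matrix.mulVec_mulVec, hSMi, ← Matrix.mulVec_mulVec, hSx, Matrix.mulVec_smul, hSx,
          Matrix.sub_mulVec, Matrix.one_mulVec, hKmat, sub_smul, one_smul]
      obtain ⟨him, hpos, hle⟩ := h (1 - lam) _ hx0 hMx
      simp only [Complex.sub_im, Complex.one_im, Complex.sub_re, Complex.one_re] at him hpos hle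
      refine ⟨by linarith, by linarith, by linarith⟩
end
end

section
/- Suppose M⁻¹A is B-normal and (λ, z) is an eigenpair of M⁻¹A. Then z is an eigenvector of M̂⁻¹B = M⁻¹A + (M⁻¹A)⁺ − M⁻¹A(M⁻¹A)⁺ with eigenvalue μ = λ + λ̄ − λ̄λ = 1 − |λ − 1|². -/
open Matrix ComplexOrder

noncomputable section

variable {n : ℕ}

theorem stmt19 (A B M : Matrix (Fin n) (Fin n) ℂ) (hA : IsUnit A.det)
    (hM : IsUnit M.det) (hB : B.PosDef)
    (hnorm : (M⁻¹ * A) * bAdj B (M⁻¹ * A) = bAdj B (M⁻¹ * A) * (M⁻¹ * A))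
    (lam : ℂ) (z : Fin n → ℂ) (hz : z ≠ 0)
    (heig : (M⁻¹ * A).mulVec z = lam • z) :
    (M⁻¹ * A + bAdj B (M⁻¹ * A) - (M⁻¹ * A) * bAdj B (M⁻¹ * A)).mulVec z
      = (lam + (starRingEnd ℂ) lam - (starRingEnd ℂ) lam * lam) • z := by
  set N := M⁻¹ * A with hNdef
  set Ns := bAdj B N with hNsdef
  have hBdet : IsUnit B.det := isUnit_iff_isUnit_det _ |>.1 hB.isUnit
  have hBinv : B * B⁻¹ = 1 := mul_nonsing_inv B hBdet
  have hBinv' : B⁻¹ * B = 1 := nonsing_inv_mul B hBdet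
  have hBH : Bᴴ = B := hB.1
  have h2 : B * Ns = Nᴴ * B := by
    rw [hNsdef, bAdj, ← Matrix.mul_assoc, ← Matrix.mul_assoc, hBinv, one_mul]
  have hNsH : Nsᴴ = B * N * B⁻¹ := by
    simp [hNsdef, bAdj, conjTranspose_mul, conjTranspose_nonsing_inv, hBH, Matrix.mul_assoc]
  have h1 : Nsᴴ * B = B * N := by
    rw [hNsH, Matrix.mul_assoc, hBinv', Matrix.mul_one]
  set u := Ns.mulVec z with hu
  -- adjoint identity: star u ⬝ᵥ B *ᵥ y = star z ⬝ᵥ B *ᵥ (N *ᵥ y)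
  have hadj : ∀ y : Fin n → ℂ, star u ⬝ᵥ B.mulVec y = star z ⬝ᵥ B.mulVec (N.mulVec y) := by
    intro y
    rw [hu, star_mulVec, ← dotProduct_mulVec, mulVec_mulVec, h1, ← mulVec_mulVec]
  -- N *ᵥ u = lam • u
  have hNu : N.mulVec u = lam • u := by
    rw [hu, mulVec_mulVec, hnorm, ← mulVec_mulVec, heig, mulVec_smul]
  have T2 : star u ⬝ᵥ B.mulVec z = lam * (star z ⬝ᵥ B.mulVec z) := by
    rw [hadj, heig, mulVec_smul, dotProduct_smul, smul_eq_mul]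
  have T1 : star u ⬝ᵥ B.mulVec u = lam * (star z ⬝ᵥ B.mulVec u) := by
    rw [hadj, hNu, mulVec_smul, dotProduct_smul, smul_eq_mul]
  have T3 : star z ⬝ᵥ B.mulVec u = (starRingEnd ℂ) lam * (star z ⬝ᵥ B.mulVec z) := by
    rw [hu, mulVec_mulVec, h2, ← mulVec_mulVec, dotProduct_mulVec, ← star_mulVec, heig]
    simp [dotProduct_smul, star_smul, smul_dotProduct]
  -- the defect vector
  set w := u - (starRingEnd ℂ) lam • z with hw
  have hzero : star w ⬝ᵥ B.mulVec w = 0 := by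
    rw [hw]
    simp only [star_sub, star_smul, mulVec_sub, mulVec_smul, sub_dotProduct,
      dotProduct_sub, smul_dotProduct, dotProduct_smul, smul_eq_mul]
    rw [T1, T2, T3]
    ring
  have hw0 : w = 0 := by
    by_contra hne
    have := hB.dotProduct_mulVec_pos hne
    rw [hzero] at this
    exact lt_irrefl _ this
  have hNs_z : Ns.mulVec z = (starRingEnd ℂ) lam • z := by
    have := sub_eq_zero.mp hw0
    rw [hu] at this; exact this
  rw [Matrix.sub_mulVec, Matrix.add_mulVec, hNs_z, heig, ← mulVec_mulVec, hNs_z,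
    mulVec_smul, heig]
  module
end
end
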